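/- For every fixed integer i ≥ 0, the limit as k → ∞ of ᾱ({1, k, k+2i+1}) equals (i+1)/(2i+3). -/

import Mathlib

open Filter

/-- The upper density of a set of integers. -/
noncomputable def density (A : Set ℤ) : ℝ :=
  Filter.limsup
    (fun N : ℕ => ((A ∩ Set.Icc (-(N : ℤ)) (N : ℤ)).ncard : ℝ) / (2 * (N : ℝ) + 1))
    Filter.atTop

/-- A set of integers is independent in the distance graph `G(S)` if no two distinct
elements differ by an element of `S`. -/
def IsIndepSet (S : Finset ℕ) (A : Set ℤ) : Prop :=
  ∀ a ∈ A, ∀ b ∈ A, a ≠ b → (a - b).natAbs ∉ S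

/-- The independence ratio of the distance graph `G(S)`. -/
noncomputable def indRatio (S : Finset ℕ) : ℝ :=
  sSup (density '' {A : Set ℤ | IsIndepSet S A})

/-!
Upper bound: `0, 1, …, i + 1, k + i + 1, …, k + 2i + 1` is a cycle of odd length `2i + 3` in
`G({1, k, k + 2i + 1})`, and an independent set meets every translate of a cycle of length
`2r + 1` in at most `r` points; averaging over the translates gives density `≤ (i + 1)/(2i + 3)`.

Lower bound: take `P = k(2i + 3)` and `a = k(i + 1) + t ≡ i + 1 (mod 2i + 3)` with `t < 2i + 3`.
Then `a`, `k a` and `(k + 2i + 1) a` are congruent mod `P` to `k(i + 1) + t`, `k(i + 1)` and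
`k(i + 2) + (2i + 1)t`, all at circular distance `≥ m = k(i + 1) - (2i + 1)t` from `0`. So every
set `{n | (n a + c) mod P < m}` is independent, and for a suitable `c` it has density
`≥ m/P ≥ (i + 1)/(2i + 3) - (2i + 3)/k`.
-/

open Finset

lemma tendsto_const_div_two_mul_add_one (C : ℝ) :
    Tendsto (fun N : ℕ => C / (2 * (N : ℝ) + 1)) atTop (nhds 0) :=
  tendsto_const_nhds.div_atTop <| tendsto_atTop_add_const_right _ _ <|
    tendsto_natCast_atTop_atTop.const_mul_atTop two_pos

lemma ncard_inter_Icc_le (A : Set ℤ) (N : ℕ) :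
    (A ∩ Set.Icc (-(N : ℤ)) N).ncard ≤ 2 * N + 1 :=
  calc (A ∩ Set.Icc (-(N : ℤ)) N).ncard ≤ (Set.Icc (-(N : ℤ)) N).ncard :=
        Set.ncard_le_ncard Set.inter_subset_right (Set.finite_Icc _ _)
    _ = 2 * N + 1 := by rw [← coe_Icc, Set.ncard_coe_finset, Int.card_Icc]; omega

lemma density_le_of_ncard_le {A : Set ℤ} {c C : ℝ}
    (h : ∀ N : ℕ, ((A ∩ Set.Icc (-(N : ℤ)) N).ncard : ℝ) ≤ c * (2 * N + 1) + C) :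
    density A ≤ c := by
  have hlim : Tendsto (fun N : ℕ => c + C / (2 * (N : ℝ) + 1)) atTop (nhds c) := by
    simpa using tendsto_const_nhds.add (tendsto_const_div_two_mul_add_one C)
  rw [density, ← hlim.limsup_eq]
  refine limsup_le_limsup (Eventually.of_forall fun N => ?_)
    (isBoundedUnder_of ⟨0, fun N => by positivity⟩).isCoboundedUnder_le hlim.isBoundedUnder_le
  rw [div_le_iff₀ (by positivity), add_mul, div_mul_cancel₀ _ (by positivity)]
  exact h N

lemma le_density_of_le_ncard {A : Set ℤ} {c C : ℝ}
    (h : ∀ N : ℕ, c * (2 * N + 1) - C ≤ (A ∩ Set.Icc (-(N : ℤ)) N).ncard) :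
    c ≤ density A := by
  have hlim : Tendsto (fun N : ℕ => c - C / (2 * (N : ℝ) + 1)) atTop (nhds c) := by
    simpa using tendsto_const_nhds.sub (tendsto_const_div_two_mul_add_one C)
  rw [density, ← hlim.limsup_eq]
  refine limsup_le_limsup (Eventually.of_forall fun N => ?_) hlim.isCoboundedUnder_le
    (isBoundedUnder_of ⟨1, fun N => ?_⟩)
  · rw [le_div_iff₀ (by positivity), sub_mul, div_mul_cancel₀ _ (by positivity)]
    exact h N
  · rw [div_le_one (by positivity)]
    exact_mod_cast ncard_inter_Icc_le A N

lemma density_le_one (A : Set ℤ) : density A ≤ 1 :=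
  density_le_of_ncard_le (C := 0) fun N => by
    simpa using (Nat.cast_le (α := ℝ)).2 (ncard_inter_Icc_le A N)

lemma density_le_indRatio {S : Finset ℕ} {A : Set ℤ} (hA : IsIndepSet S A) :
    density A ≤ indRatio S :=
  le_csSup ⟨1, by rintro _ ⟨B, -, rfl⟩; exact density_le_one B⟩ ⟨A, hA, rfl⟩

lemma indRatio_le {S : Finset ℕ} {c : ℝ} (h : ∀ A, IsIndepSet S A → density A ≤ c) :
    indRatio S ≤ c :=
  csSup_le ⟨_, ∅, fun _ ha => ha.elim, rfl⟩ (by rintro _ ⟨A, hA, rfl⟩; exact h A hA)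

lemma card_filter_le_of_odd_cycle {r : ℕ} (p : Fin (2 * r + 1) → Prop) [DecidablePred p]
    (h : ∀ j, ¬(p j ∧ p (j + 1))) : #{j | p j} ≤ r := by
  set J : Finset (Fin (2 * r + 1)) := {j | p j}
  have hdisj : Disjoint J (J.map (addRightEmbedding 1)) := by
    rw [disjoint_left]
    rintro _ hj hmap
    obtain ⟨j, hj', rfl⟩ := mem_map.1 hmap
    exact h j ⟨(mem_filter.1 hj').2, (mem_filter.1 hj).2⟩
  have := card_le_univ (J ∪ J.map (addRightEmbedding 1))
  rw [card_union_of_disjoint hdisj, card_map, Fintype.card_fin] at this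
  omega

lemma density_le_of_odd_cycle {S : Finset ℕ} {A : Set ℤ} (hA : IsIndepSet S A) {r : ℕ}
    (w : Fin (2 * r + 1) → ℤ) (hw : ∀ j, w (j + 1) ≠ w j ∧ (w (j + 1) - w j).natAbs ∈ S) :
    density A ≤ r / (2 * r + 1) := by
  classical
  obtain ⟨B, hB⟩ : ∃ B : ℕ, ∀ j, (w j).natAbs ≤ B :=
    ⟨univ.sup fun j => (w j).natAbs, fun j => le_sup (f := fun j => (w j).natAbs) (mem_univ j)⟩
  refine density_le_of_ncard_le (C := 2 * B) fun N => ?_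
  set F : Finset ℤ := {n ∈ Icc (-(N : ℤ)) N | n ∈ A}
  have hF : (A ∩ Set.Icc (-(N : ℤ)) N).ncard = #F := by
    rw [← Set.ncard_coe_finset]
    congr 1
    ext n
    simp only [F, Set.mem_inter_iff, Set.mem_Icc, coe_filter, mem_Icc, Set.mem_ofPred_eq]
    exact and_comm
  set X := Icc (-(N : ℤ) - B) (N + B)
  have hX : #X = 2 * N + 2 * B + 1 := by
    rw [Int.card_Icc]
    omega
  have hcycle : ∀ x ∈ X, #{j | x + w j ∈ F} ≤ r := fun x _ =>
    card_filter_le_of_odd_cycle _ fun j ⟨hj, hj1⟩ =>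
      hA _ (mem_filter.1 hj1).2 _ (mem_filter.1 hj).2 (by simpa using (hw j).1)
        (by simpa using (hw j).2)
  have hcover : ∀ j, #F ≤ #{x ∈ X | x + w j ∈ F} := fun j => by
    refine card_le_card_of_injOn (· - w j) (fun n hn => ?_)
      (fun _ _ _ _ h => sub_left_injective h)
    have := (mem_Icc.1 (mem_filter.1 hn).1)
    have := hB j
    simp only [coe_filter, Set.mem_ofPred_eq, sub_add_cancel, mem_Icc, X]
    exact ⟨⟨by omega, by omega⟩, hn⟩
  have hcount : (2 * r + 1) * #F ≤ r * (2 * N + 2 * B + 1) :=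
    calc (2 * r + 1) * #F = ∑ _j : Fin (2 * r + 1), #F := by simp
      _ ≤ ∑ j, #{x ∈ X | x + w j ∈ F} := sum_le_sum fun j _ => hcover j
      _ = ∑ x ∈ X, #{j | x + w j ∈ F} :=
        sum_card_bipartiteAbove_eq_sum_card_bipartiteBelow (fun j x => x + w j ∈ F)
      _ ≤ ∑ _x ∈ X, r := sum_le_sum hcycle
      _ = r * (2 * N + 2 * B + 1) := by rw [sum_const, hX, smul_eq_mul, mul_comm]
  have hcountR : (2 * r + 1 : ℝ) * #F ≤ r * (2 * N + 2 * B + 1) := by exact_mod_cast hcount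
  rw [hF, div_mul_eq_mul_div, div_add' _ _ _ (by positivity), le_div_iff₀ (by positivity)]
  nlinarith

def oddCycle (i k : ℕ) (j : Fin (2 * (i + 1) + 1)) : ℤ :=
  if (j : ℕ) ≤ i + 1 then j else k + j - 1

lemma oddCycle_step {i k : ℕ} (hk : 1 ≤ k) (j : Fin (2 * (i + 1) + 1)) :
    oddCycle i k (j + 1) ≠ oddCycle i k j ∧
      (oddCycle i k (j + 1) - oddCycle i k j).natAbs ∈ ({1, k, k + 2 * i + 1} : Finset ℕ) := by
  have hj := j.isLt
  simp only [oddCycle, Fin.val_add_one, Fin.ext_iff, Fin.val_last, mem_insert, mem_singleton]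
  split_ifs <;> omega

lemma indRatio_one_k_kplusodd_le {i k : ℕ} (hk : 1 ≤ k) :
    indRatio {1, k, k + 2 * i + 1} ≤ ((i : ℝ) + 1) / (2 * i + 3) :=
  indRatio_le fun A hA => by
    convert density_le_of_odd_cycle hA (oddCycle i k) (oddCycle_step hk) using 2 <;> push_cast <;>
      ring

section Rotation

variable {P : ℕ} [NeZero P]

lemma ZMod.val_sub_lt_or_lt_val_sub_add {x y : ZMod P} {m : ℕ} (hx : x.val < m)
    (hy : y.val < m) : (x - y).val < m ∨ P < (x - y).val + m := by
  have hadd := ZMod.val_add (x - y) y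
  rw [sub_add_cancel] at hadd
  have := (x - y).val_lt
  have := y.val_lt
  rcases lt_or_ge ((x - y).val + y.val) P with h | h
  · rw [Nat.mod_eq_of_lt h] at hadd
    omega
  · rw [Nat.mod_eq_sub_mod h, Nat.mod_eq_of_lt (by omega)] at hadd
    omega

lemma isIndepSet_setOf_val_lt {S : Finset ℕ} {a m : ℕ} (c : ZMod P)
    (hS : ∀ s ∈ S, m ≤ s * a % P ∧ s * a % P + m ≤ P) :
    IsIndepSet S {n : ℤ | ((n : ZMod P) * a + c).val < m} := by
  suffices h : ∀ n n' : ℤ, ((n : ZMod P) * a + c).val < m → ((n' : ZMod P) * a + c).val < m →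
      ∀ s ∈ S, n - n' ≠ s by
    intro n hn n' hn' _ hs
    rcases Int.natAbs_eq (n - n') with h' | h'
    · exact h n n' hn hn' _ hs h'
    · exact h n' n hn' hn _ hs (by omega)
  intro n n' hn hn' s hs hdiff
  have hval : ((n : ZMod P) * a + c - ((n' : ZMod P) * a + c)).val = s * a % P := by
    rw [← ZMod.val_natCast, add_sub_add_right_eq_sub, ← sub_mul, ← Int.cast_sub, hdiff]
    push_cast
    rfl
  have := ZMod.val_sub_lt_or_lt_val_sub_add hn hn'
  have := hS s hs
  omega

lemma le_density_setOf_intCast_mem (R : Finset (ZMod P)) :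
    (#R : ℝ) / P ≤ density {n : ℤ | (n : ZMod P) ∈ R} := by
  have hP : 0 < P := Nat.pos_of_neZero P
  refine le_density_of_le_ncard (C := 2 * #R) fun N => ?_
  set q := N / P
  -- the `2q` full periods `[P l, P l + P)`, `-q ≤ l < q`, lie in `[-N, N]`
  set e : ZMod P × ℤ → ℤ := fun vl => vl.1.val + P * vl.2
  have he : ∀ vl, (e vl : ZMod P) = vl.1 := fun vl => by simp [e]
  have hmaps : ∀ vl ∈ R ×ˢ Ico (-(q : ℤ)) q,
      e vl ∈ {n : ℤ | (n : ZMod P) ∈ R} ∩ Set.Icc (-(N : ℤ)) N := by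
    rintro ⟨v, l⟩ hvl
    obtain ⟨hv, hl⟩ := mem_product.1 hvl
    have hl := mem_Ico.1 hl
    have hqN : (P : ℤ) * q ≤ N := by exact_mod_cast Nat.mul_div_le N P
    have hvP : (v.val : ℤ) < P := by exact_mod_cast v.val_lt
    refine ⟨by simpa [he] using hv, ?_, ?_⟩ <;> simp only [e] <;> nlinarith
  have hinj : Set.InjOn e (R ×ˢ Ico (-(q : ℤ)) q : Finset _) := by
    rintro ⟨v, l⟩ - ⟨v', l'⟩ - h
    have hv : v = v' := by simpa [he] using congrArg (fun n : ℤ => (n : ZMod P)) h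
    subst hv
    simpa [e, hP.ne'] using h
  have hcount : #R * (2 * q) ≤ ({n : ℤ | (n : ZMod P) ∈ R} ∩ Set.Icc (-(N : ℤ)) N).ncard := by
    calc #R * (2 * q) = #((R ×ˢ Ico (-(q : ℤ)) q).image e) := by
          rw [card_image_of_injOn hinj, card_product, Int.card_Ico]; congr; omega
      _ ≤ _ := by
          rw [← Set.ncard_coe_finset]
          refine Set.ncard_le_ncard ?_ ((Set.finite_Icc _ _).subset Set.inter_subset_right)
          rw [coe_image]
          exact Set.image_subset_iff.2 hmaps
  have hN : N + 1 ≤ P * q + P := by simpa [mul_add] using Nat.lt_mul_div_succ N hP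
  have hNR : (N + 1 : ℝ) ≤ P * q + P := by exact_mod_cast hN
  calc (#R : ℝ) / P * (2 * N + 1) - 2 * #R ≤ #R * (2 * q) := by
        rw [div_mul_eq_mul_div, sub_le_iff_le_add, div_le_iff₀ (by positivity)]
        nlinarith
    _ ≤ _ := by exact_mod_cast hcount

lemma card_filter_add_val_lt (b : ZMod P) {m : ℕ} (hm : m ≤ P) :
    #{c : ZMod P | (b + c).val < m} = m := by
  rw [card_equiv (Equiv.addLeft b) (t := {c : ZMod P | c.val < m}) (by simp)]
  refine (card_nbij ZMod.val (fun c hc => ?_) (ZMod.val_injective P).injOn fun v hv => ?_).trans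
    (card_range m)
  · simpa using hc
  · have hv : v < m := by simpa using hv
    exact ⟨v, by simpa [ZMod.val_cast_of_lt (hv.trans_le hm)] using hv,
      ZMod.val_cast_of_lt (hv.trans_le hm)⟩

lemma exists_le_card_filter_val_lt (a : ZMod P) {m : ℕ} (hm : m ≤ P) :
    ∃ c : ZMod P, m ≤ #{x : ZMod P | (x * a + c).val < m} := by
  have hsum : ∑ _c : ZMod P, m = ∑ c : ZMod P, #{x : ZMod P | (x * a + c).val < m} :=
    calc ∑ _c : ZMod P, m = ∑ x : ZMod P, #{c : ZMod P | (x * a + c).val < m} := by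
          simp only [card_filter_add_val_lt _ hm]
      _ = ∑ c : ZMod P, #{x : ZMod P | (x * a + c).val < m} :=
          sum_card_bipartiteAbove_eq_sum_card_bipartiteBelow (fun x c => (x * a + c).val < m)
  obtain ⟨c, -, hc⟩ := exists_le_of_sum_le univ_nonempty hsum.le
  exact ⟨c, hc⟩

lemma le_indRatio_of_forall_mod {S : Finset ℕ} {a m : ℕ} (hm : m ≤ P)
    (hS : ∀ s ∈ S, m ≤ s * a % P ∧ s * a % P + m ≤ P) : (m : ℝ) / P ≤ indRatio S := by
  obtain ⟨c, hc⟩ := exists_le_card_filter_val_lt (a : ZMod P) hm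
  calc (m : ℝ) / P ≤ (#{x : ZMod P | (x * a + c).val < m} : ℝ) / P := by gcongr
    _ ≤ density {n : ℤ | (n : ZMod P) ∈ ({x : ZMod P | (x * a + c).val < m} : Finset _)} :=
        le_density_setOf_intCast_mem _
    _ ≤ indRatio S := density_le_indRatio (by simpa using isIndepSet_setOf_val_lt c hS)

end Rotation

lemma exists_lt_add_eq_add_mul {p x y : ℕ} (hp : 0 < p) (hxy : y ≤ x) :
    ∃ t < p, ∃ c, x + t = y + p * c := by
  have : NeZero p := ⟨hp.ne'⟩
  set t := ((y : ZMod p) - x).val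
  have hmod : x + t ≡ y [MOD p] := by
    rw [← ZMod.natCast_eq_natCast_iff]
    simp [t]
  obtain ⟨c, hc⟩ := (Nat.modEq_iff_dvd' (by omega)).1 hmod.symm
  exact ⟨t, ZMod.val_lt _, c, by omega⟩

lemma le_indRatio_one_k_kplusodd {i k : ℕ} (hk : (2 * i + 3) * (2 * i + 3) ≤ k) :
    ((i : ℝ) + 1) / (2 * i + 3) - (2 * i + 3) / k ≤ indRatio {1, k, k + 2 * i + 1} := by
  obtain ⟨t, ht, c, hc⟩ :=
    exists_lt_add_eq_add_mul (p := 2 * i + 3) (x := k * (i + 1)) (y := i + 1) (by omega)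
      (by nlinarith)
  have hD : (2 * i + 1) * t < k * (i + 1) := by nlinarith
  have hk0 : 0 < k := by nlinarith
  have : NeZero (k * (2 * i + 3)) := ⟨by positivity⟩
  -- linear forms of the products, for `omega`
  have hP : k * (2 * i + 3) = 2 * (k * (i + 1)) + k := by ring
  have hDt : (2 * i + 1) * t = 2 * (i * t) + t := by ring
  have hmod_one : 1 * (k * (i + 1) + t) % (k * (2 * i + 3)) = k * (i + 1) + t := by
    rw [one_mul, Nat.mod_eq_of_lt (by omega)]
  have hmod_k : k * (k * (i + 1) + t) % (k * (2 * i + 3)) = k * (i + 1) := by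
    rw [show k * (k * (i + 1) + t) = k * (i + 1) + k * (2 * i + 3) * c by
        linear_combination k * hc,
      Nat.add_mul_mod_self_left, Nat.mod_eq_of_lt (by omega)]
  have hmod_kplusodd : (k + 2 * i + 1) * (k * (i + 1) + t) % (k * (2 * i + 3)) =
      k * (i + 1) + k + (2 * i + 1) * t := by
    rw [show (k + 2 * i + 1) * (k * (i + 1) + t) =
        k * (i + 1) + k + (2 * i + 1) * t + k * (2 * i + 3) * (c + i) by
        linear_combination k * hc,
      Nat.add_mul_mod_self_left, Nat.mod_eq_of_lt (by omega)]
  calc ((i : ℝ) + 1) / (2 * i + 3) - (2 * i + 3) / k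
      ≤ ((k * (i + 1) - (2 * i + 1) * t : ℕ) : ℝ) / (k * (2 * i + 3) : ℕ) := by
        have hkR : (0 : ℝ) < k := by exact_mod_cast hk0
        have hDR : ((2 * i + 1) * t : ℝ) ≤ (2 * i + 3) * (2 * i + 3) := by
          have : (t : ℝ) + 1 ≤ 2 * i + 3 := by exact_mod_cast ht
          nlinarith
        rw [Nat.cast_sub hD.le, div_sub_div _ _ (by positivity) hkR.ne',
          div_le_div_iff₀ (by positivity) (by positivity)]
        push_cast
        nlinarith [mul_le_mul_of_nonneg_left hDR (by positivity : (0 : ℝ) ≤ k * (2 * i + 3))]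
    _ ≤ indRatio {1, k, k + 2 * i + 1} := by
        refine le_indRatio_of_forall_mod (a := k * (i + 1) + t) (by omega) ?_
        simp only [mem_insert, mem_singleton]
        rintro s (rfl | rfl | rfl) <;> omega

/-- For fixed `i ≥ 0`, `ᾱ({1, k, k+2i+1}) → (i+1)/(2i+3)` as `k → ∞`. -/
theorem tendsto_indRatio_one_k_kplusodd (i : ℕ) :
    Filter.Tendsto (fun k : ℕ => indRatio ({1, k, k + 2 * i + 1} : Finset ℕ))
      Filter.atTop (nhds (((i : ℝ) + 1) / (2 * (i : ℝ) + 3))) := by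
  have hlower : Tendsto (fun k : ℕ => ((i : ℝ) + 1) / (2 * i + 3) - (2 * i + 3) / k) atTop
      (nhds (((i : ℝ) + 1) / (2 * i + 3))) := by
    simpa using tendsto_const_nhds.sub (tendsto_const_div_atTop_nhds_zero_nat (2 * (i : ℝ) + 3))
  refine tendsto_of_tendsto_of_tendsto_of_le_of_le' hlower tendsto_const_nhds ?_ ?_
  · filter_upwards [eventually_ge_atTop ((2 * i + 3) * (2 * i + 3))] with k hk
    exact le_indRatio_one_k_kplusodd hk
  · filter_upwards [eventually_ge_atTop 1] with k hk
    exact indRatio_one_k_kplusodd_le hk
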